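/- arXiv:2506.06679 — 2 statements merged into one kernel-verified Lean document; each statement's English description precedes it below -/
import Mathlib

section
/- Let λ > 1 be a real number. Suppose f : ℝⁿ × ℝᵐ → ℝⁿ is Borel measurable, X and T ⊆ X are bounded open sets, X̂ is a Borel set with X̂ ⊇ {f(x₀,u) : x₀ ∈ X, u ∈ U} ∪ X, and P is a Borel probability measure on ℝᵐ with P(U) = 1. If there exists a bounded Borel measurable function v : X̂ → ℝ satisfying: (i) ∫ v(f(x,u)) dP(u) ≥ λ·v(x) for every x ∈ X\T, and (ii) v(x) ≤ 0 for every x ∈ X̂\X, then for every x₀ ∈ X with v(x₀) > 0 one has P^∞({π : ∃ k ∈ ℕ, φ^π_{x₀}(k) ∈ T and φ^π_{x₀}(l) ∈ X for all 0 ≤ l ≤ k}) > 0; that is, {x ∈ X : v(x) > 0} is a 0-reach-avoid set. -/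
/-!
Suppose the reach-avoid event from `x₀` were `P^∞`-null. Let `J k` be the expectation of
`v (x k)` on the paths whose first `k` states lie in `X \ T` and whose first `k` inputs lie
in `U` (and `0` on the other paths). Since `P^∞` is invariant under resampling a single
coordinate, the `k`-th input can be integrated out first, and condition (i) then gives
`λ * v (x k) ≤ 𝔼[v (x (k+1))]` whenever `x k ∈ X \ T`; a path that is still running and has
`x k ∉ X \ T` either reaches `T` inside `X` (a null event) or has left `X`, where `v ≤ 0`
by (ii). Hence `λ * J k ≤ J (k+1)`, so `J k ≥ λ ^ k * v x₀ → ∞`, contradicting the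
boundedness of `v` on `X̂`.
-/

open MeasureTheory Set

noncomputable section

/-- Trajectory of the discrete-time control system `x(t+1) = f(x(t), u(t))`. -/
def traj {n m : ℕ} (f : (Fin n → ℝ) → (Fin m → ℝ) → (Fin n → ℝ))
    (x0 : Fin n → ℝ) (π : ℕ → (Fin m → ℝ)) : ℕ → (Fin n → ℝ)
  | 0 => x0
  | t + 1 => f (traj f x0 π t) (π t)

namespace MeasureTheory

theorem Measure.eq_infinitePi_of_cylinder {β : Type*} [MeasurableSpace β]
    {P : Measure β} [IsProbabilityMeasure P] {ν : Measure (ℕ → β)}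
    (hν : ∀ (k : ℕ) (s : ℕ → Set β), (∀ i, MeasurableSet (s i)) →
      ν {ω | ∀ i < k, ω i ∈ s i} = ∏ i ∈ Finset.range k, P (s i)) :
    ν = Measure.infinitePi (fun _ ↦ P) := by
  classical
  refine Measure.eq_infinitePi _ fun s t ht ↦ ?_
  obtain ⟨k, hsk⟩ := s.exists_nat_subset_range
  have hpi : (s : Set ℕ).pi t = {ω | ∀ i < k, ω i ∈ if i ∈ s then t i else univ} := by
    ext ω
    simp only [mem_pi, Finset.mem_coe, mem_ofPred_eq]
    refine ⟨fun h i _ ↦ ?_, fun h i hi ↦ ?_⟩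
    · split_ifs with hi
      exacts [h i hi, mem_univ _]
    · simpa [hi] using h i (Finset.mem_range.mp (hsk hi))
  rw [hpi, hν k _ fun i ↦ by split_ifs <;> simp [ht]]
  simp only [apply_ite P, measure_univ, Finset.prod_ite_mem, Finset.inter_eq_right.mpr hsk]

section Update

variable {ι : Type*} [DecidableEq ι] {X : ι → Type*} [∀ i, MeasurableSpace (X i)]
  (μ : ∀ i, Measure (X i)) [∀ i, IsProbabilityMeasure (μ i)]

theorem measurePreserving_update_infinitePi (k : ι) :
    MeasurePreserving (fun p : (Π i, X i) × X k ↦ Function.update p.1 k p.2)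
      ((Measure.infinitePi μ).prod (μ k)) (Measure.infinitePi μ) := by
  refine ⟨measurable_update', Measure.eq_infinitePi _ fun s t ht ↦ ?_⟩
  have hpre : (fun p : (Π i, X i) × X k ↦ Function.update p.1 k p.2) ⁻¹' (s : Set ι).pi t =
      ((s.erase k : Set ι).pi t) ×ˢ (if k ∈ s then t k else univ) := by
    ext ⟨x, y⟩
    simp only [mem_preimage, mem_pi, Finset.mem_coe, mem_prod, Finset.mem_erase]
    constructor
    · intro h
      refine ⟨fun i ⟨hik, hi⟩ ↦ by simpa [Function.update_of_ne hik] using h i hi, ?_⟩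
      split_ifs with hk
      · simpa using h k hk
      · exact mem_univ _
    · rintro ⟨hx, hy⟩ i hi
      by_cases hik : i = k
      · subst hik
        simpa [hi] using hy
      · simpa [Function.update_of_ne hik] using hx i ⟨hik, hi⟩
  rw [Measure.map_apply measurable_update' (.pi s.countable_toSet fun i _ ↦ ht i), hpre,
    Measure.prod_prod, Measure.infinitePi_pi _ fun i _ ↦ ht i]
  split_ifs with hk
  · rw [mul_comm, Finset.mul_prod_erase s (fun i ↦ μ i (t i)) hk]
  · rw [Finset.erase_eq_of_notMem hk, measure_univ, mul_one]

variable {E : Type*} [NormedAddCommGroup E] {F : (Π i, X i) → E}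

theorem Integrable.comp_update_infinitePi (hF : Integrable F (Measure.infinitePi μ)) (k : ι) :
    Integrable (fun p : (Π i, X i) × X k ↦ F (Function.update p.1 k p.2))
      ((Measure.infinitePi μ).prod (μ k)) :=
  (measurePreserving_update_infinitePi μ k).integrable_comp_of_integrable hF

theorem integral_integral_update_infinitePi [NormedSpace ℝ E]
    (hF : Integrable F (Measure.infinitePi μ)) (k : ι) :
    ∫ x, ∫ y, F (Function.update x k y) ∂μ k ∂Measure.infinitePi μ =
      ∫ x, F x ∂Measure.infinitePi μ := by
  have hmp := measurePreserving_update_infinitePi μ k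
  have hFm : AEStronglyMeasurable F ((Measure.infinitePi μ).prod (μ k) |>.map
      fun p ↦ Function.update p.1 k p.2) := by
    rw [hmp.map_eq]
    exact hF.aestronglyMeasurable
  rw [← integral_prod _ (hF.comp_update_infinitePi μ k),
    ← integral_map hmp.measurable.aemeasurable hFm, hmp.map_eq]

end Update

end MeasureTheory

section Trajectory

variable {n m : ℕ} {f : (Fin n → ℝ) → (Fin m → ℝ) → (Fin n → ℝ)} {x0 : Fin n → ℝ}

theorem traj_congr {π π' : ℕ → Fin m → ℝ} {k : ℕ} (h : ∀ i < k, π i = π' i) :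
    traj f x0 π k = traj f x0 π' k := by
  induction k with
  | zero => rfl
  | succ k ih => simp only [traj, ih fun i hi ↦ h i (hi.trans k.lt_succ_self), h k k.lt_succ_self]

theorem traj_update_of_le (π : ℕ → Fin m → ℝ) {k l : ℕ} (u : Fin m → ℝ) (hl : l ≤ k) :
    traj f x0 (Function.update π k u) l = traj f x0 π l :=
  traj_congr fun _ hi ↦ Function.update_of_ne (hi.trans_le hl).ne _ _

theorem traj_update_succ (π : ℕ → Fin m → ℝ) (k : ℕ) (u : Fin m → ℝ) :
    traj f x0 (Function.update π k u) (k + 1) = f (traj f x0 π k) u := by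
  simp only [traj, traj_update_of_le π u le_rfl, Function.update_self]

theorem measurable_traj (hf : Measurable fun p : (Fin n → ℝ) × (Fin m → ℝ) ↦ f p.1 p.2)
    (k : ℕ) : Measurable fun π : ℕ → Fin m → ℝ ↦ traj f x0 π k := by
  induction k with
  | zero => exact measurable_const
  | succ k ih => exact hf.comp (ih.prodMk (measurable_pi_apply k))

end Trajectory

section ReachAvoid

variable {n m : ℕ} (f : (Fin n → ℝ) → (Fin m → ℝ) → (Fin n → ℝ)) (x0 : Fin n → ℝ)

def reachAvoidPaths (X T : Set (Fin n → ℝ)) : Set (ℕ → Fin m → ℝ) :=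
  {π | ∃ k, traj f x0 π k ∈ T ∧ ∀ l ≤ k, traj f x0 π l ∈ X}

def stayingPaths (S : Set (Fin n → ℝ)) (U : Set (Fin m → ℝ)) (k : ℕ) :
    Set (ℕ → Fin m → ℝ) :=
  {π | ∀ l < k, traj f x0 π l ∈ S ∧ π l ∈ U}

def killedValue (v : (Fin n → ℝ) → ℝ) (S : Set (Fin n → ℝ)) (U : Set (Fin m → ℝ)) (k : ℕ)
    (π : ℕ → Fin m → ℝ) : ℝ :=
  (stayingPaths f x0 S U k).indicator (fun π ↦ v (traj f x0 π k)) π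

variable {f x0} {X T S Y : Set (Fin n → ℝ)} {U : Set (Fin m → ℝ)} {v : (Fin n → ℝ) → ℝ}
  {π : ℕ → Fin m → ℝ} {k : ℕ}

theorem mem_reachAvoidPaths_of_mem_stayingPaths (hTX : T ⊆ X)
    (hπ : π ∈ stayingPaths f x0 (X \ T) U k) (hT : traj f x0 π k ∈ T) :
    π ∈ reachAvoidPaths f x0 X T :=
  ⟨k, hT, fun l hl ↦ hl.lt_or_eq.elim (fun hlk ↦ (hπ l hlk).1.1) fun h ↦ h ▸ hTX hT⟩

theorem update_mem_stayingPaths_succ_iff {u : Fin m → ℝ} :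
    Function.update π k u ∈ stayingPaths f x0 S U (k + 1) ↔
      π ∈ stayingPaths f x0 S U k ∧ traj f x0 π k ∈ S ∧ u ∈ U := by
  simp only [stayingPaths, mem_ofPred_eq, Nat.forall_lt_succ_right, traj_update_of_le π u le_rfl,
    Function.update_self]
  refine and_congr_left' (forall₂_congr fun l hl ↦ ?_)
  rw [traj_update_of_le π u hl.le, Function.update_of_ne hl.ne]

theorem measurableSet_stayingPaths
    (hf : Measurable fun p : (Fin n → ℝ) × (Fin m → ℝ) ↦ f p.1 p.2)
    (hS : MeasurableSet S) (hU : MeasurableSet U) (k : ℕ) :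
    MeasurableSet (stayingPaths f x0 S U k) := by
  simp only [stayingPaths, ofPred_forall]
  exact .iInter fun l ↦ .iInter fun _ ↦
    (measurable_traj hf l hS).inter (measurable_pi_apply l hU)

theorem traj_mem_of_mem_stayingPaths (hY : ∀ x ∈ S, ∀ u ∈ U, f x u ∈ Y) (hx0 : x0 ∈ Y)
    (hπ : π ∈ stayingPaths f x0 S U k) : traj f x0 π k ∈ Y := by
  cases k with
  | zero => exact hx0
  | succ k => exact hY _ (hπ k k.lt_succ_self).1 _ (hπ k k.lt_succ_self).2

theorem killedValue_zero : killedValue f x0 v S U 0 π = v x0 := by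
  simp [killedValue, stayingPaths, traj]

theorem abs_killedValue_le {M : ℝ} (hY : ∀ x ∈ S, ∀ u ∈ U, f x u ∈ Y) (hx0 : x0 ∈ Y)
    (hM : ∀ x ∈ Y, |v x| ≤ M) (k : ℕ) (π : ℕ → Fin m → ℝ) :
    |killedValue f x0 v S U k π| ≤ M := by
  by_cases hπ : π ∈ stayingPaths f x0 S U k
  · simpa [killedValue, hπ] using hM _ (traj_mem_of_mem_stayingPaths hY hx0 hπ)
  · simpa [killedValue, hπ] using (abs_nonneg _).trans (hM x0 hx0)

theorem integrable_killedValue {M : ℝ} {μ : Measure (ℕ → Fin m → ℝ)} [IsFiniteMeasure μ]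
    (hf : Measurable fun p : (Fin n → ℝ) × (Fin m → ℝ) ↦ f p.1 p.2)
    (hS : MeasurableSet S) (hU : MeasurableSet U) (hv : Measurable v)
    (hY : ∀ x ∈ S, ∀ u ∈ U, f x u ∈ Y) (hx0 : x0 ∈ Y) (hM : ∀ x ∈ Y, |v x| ≤ M) (k : ℕ) :
    Integrable (killedValue f x0 v S U k) μ :=
  (integrable_const M).mono'
    ((hv.comp (measurable_traj hf k)).indicator
      (measurableSet_stayingPaths hf hS hU k)).aestronglyMeasurable
    (ae_of_all _ (abs_killedValue_le hY hx0 hM k))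

theorem integral_killedValue_le {M : ℝ} (μ : Measure (ℕ → Fin m → ℝ)) [IsProbabilityMeasure μ]
    (hY : ∀ x ∈ S, ∀ u ∈ U, f x u ∈ Y) (hx0 : x0 ∈ Y) (hM : ∀ x ∈ Y, |v x| ≤ M) (k : ℕ) :
    ∫ π, killedValue f x0 v S U k π ∂μ ≤ M := by
  have h := norm_integral_le_of_norm_le_const (μ := μ) (f := killedValue f x0 v S U k)
    (ae_of_all _ (abs_killedValue_le hY hx0 hM k))
  exact (le_abs_self _).trans (by simpa using h)

variable {lam : ℝ} {P : Measure (Fin m → ℝ)} [IsProbabilityMeasure P]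

theorem mul_killedValue_le_integral_update (hlam : 0 ≤ lam) (hU : MeasurableSet U)
    (hPU : P U = 1) (hTX : T ⊆ X) (hY : ∀ x ∈ X \ T, ∀ u ∈ U, f x u ∈ Y) (hx0 : x0 ∈ Y)
    (h1 : ∀ x ∈ X \ T, lam * v x ≤ ∫ u, v (f x u) ∂P) (h2 : ∀ x ∈ Y \ X, v x ≤ 0)
    (hπ : π ∉ reachAvoidPaths f x0 X T) (k : ℕ) :
    lam * killedValue f x0 v (X \ T) U k π ≤
      ∫ u, killedValue f x0 v (X \ T) U (k + 1) (Function.update π k u) ∂P := by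
  by_cases hrun : π ∈ stayingPaths f x0 (X \ T) U k ∧ traj f x0 π k ∈ X \ T
  · have hnext : (fun u ↦ killedValue f x0 v (X \ T) U (k + 1) (Function.update π k u)) =
        U.indicator fun u ↦ v (f (traj f x0 π k) u) := by
      ext u
      by_cases hu : u ∈ U
      · rw [indicator_of_mem hu, killedValue, indicator_of_mem
          (update_mem_stayingPaths_succ_iff.mpr ⟨hrun.1, hrun.2, hu⟩), traj_update_succ]
      · rw [indicator_of_notMem hu, killedValue, indicator_of_notMem
          fun h ↦ hu (update_mem_stayingPaths_succ_iff.mp h).2.2]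
    have hUae : ∀ᵐ u ∂P, u ∈ U := ae_iff.mpr ((prob_compl_eq_zero_iff hU).mpr hPU)
    rw [hnext, integral_indicator hU, Measure.restrict_eq_self_of_ae_mem hUae]
    simpa only [killedValue, indicator_of_mem hrun.1] using h1 _ hrun.2
  · have hnext (u : Fin m → ℝ) :
        killedValue f x0 v (X \ T) U (k + 1) (Function.update π k u) = 0 :=
      indicator_of_notMem
        (fun h ↦ hrun (And.imp_right And.left (update_mem_stayingPaths_succ_iff.mp h))) _
    simp only [hnext, integral_zero]
    refine mul_nonpos_of_nonneg_of_nonpos hlam ?_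
    by_cases hstay : π ∈ stayingPaths f x0 (X \ T) U k
    · have hX : traj f x0 π k ∉ X := fun hX ↦ hrun ⟨hstay, hX,
        fun hT ↦ hπ (mem_reachAvoidPaths_of_mem_stayingPaths hTX hstay hT)⟩
      simpa only [killedValue, indicator_of_mem hstay]
        using h2 _ ⟨traj_mem_of_mem_stayingPaths hY hx0 hstay, hX⟩
    · simp [killedValue, hstay]

theorem pow_mul_le_integral_killedValue {M : ℝ}
    (hf : Measurable fun p : (Fin n → ℝ) × (Fin m → ℝ) ↦ f p.1 p.2)
    (hXT : MeasurableSet (X \ T)) (hU : MeasurableSet U) (hv : Measurable v)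
    (hlam : 0 ≤ lam) (hPU : P U = 1) (hTX : T ⊆ X) (hY : ∀ x ∈ X \ T, ∀ u ∈ U, f x u ∈ Y)
    (hx0 : x0 ∈ Y) (hM : ∀ x ∈ Y, |v x| ≤ M)
    (h1 : ∀ x ∈ X \ T, lam * v x ≤ ∫ u, v (f x u) ∂P) (h2 : ∀ x ∈ Y \ X, v x ≤ 0)
    (hnull : Measure.infinitePi (fun _ ↦ P) (reachAvoidPaths f x0 X T) = 0) (k : ℕ) :
    lam ^ k * v x0 ≤ ∫ π, killedValue f x0 v (X \ T) U k π ∂Measure.infinitePi (fun _ ↦ P) := by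
  have hint := integrable_killedValue (μ := Measure.infinitePi fun _ ↦ P) hf hXT hU hv hY hx0 hM
  induction k with
  | zero => simp [killedValue_zero]
  | succ k ih =>
    calc lam ^ (k + 1) * v x0 = lam * (lam ^ k * v x0) := by ring
      _ ≤ lam * ∫ π, killedValue f x0 v (X \ T) U k π ∂Measure.infinitePi (fun _ ↦ P) :=
        mul_le_mul_of_nonneg_left ih hlam
      _ = ∫ π, lam * killedValue f x0 v (X \ T) U k π ∂Measure.infinitePi (fun _ ↦ P) :=
        (integral_const_mul lam _).symm
      _ ≤ ∫ π, ∫ u, killedValue f x0 v (X \ T) U (k + 1) (Function.update π k u) ∂P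
            ∂Measure.infinitePi (fun _ ↦ P) :=
        integral_mono_ae ((hint k).const_mul lam)
          ((hint (k + 1)).comp_update_infinitePi _ k).integral_prod_left
          (measure_eq_zero_iff_ae_notMem.mp hnull |>.mono fun π hπ ↦
            mul_killedValue_le_integral_update hlam hU hPU hTX hY hx0 h1 h2 hπ k)
      _ = ∫ π, killedValue f x0 v (X \ T) U (k + 1) π ∂Measure.infinitePi (fun _ ↦ P) :=
        integral_integral_update_infinitePi _ (hint (k + 1)) k

end ReachAvoid

theorem stmt_7_general {n m : ℕ} (lam : ℝ) (hlam : 1 < lam)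
    (f : (Fin n → ℝ) → (Fin m → ℝ) → (Fin n → ℝ))
    (hf : Measurable fun p : (Fin n → ℝ) × (Fin m → ℝ) => f p.1 p.2)
    (U : Set (Fin m → ℝ)) (hUc : IsCompact U)
    (X T Xhat : Set (Fin n → ℝ))
    (hXo : IsOpen X)
    (hTo : IsOpen T) (hTX : T ⊆ X)
    (hXhat1 : ∀ x ∈ X, ∀ u ∈ U, f x u ∈ Xhat) (hXhat2 : X ⊆ Xhat)
    (P : Measure (Fin m → ℝ)) [IsProbabilityMeasure P] (hPU : P U = 1)
    -- `Pinf` is the i.i.d. product measure `P^∞` on the sequence space,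
    -- characterized on cylinder sets.
    (Pinf : Measure (ℕ → (Fin m → ℝ)))
    (hPinf : ∀ (k : ℕ) (s : ℕ → Set (Fin m → ℝ)), (∀ i, MeasurableSet (s i)) →
      Pinf {ω | ∀ i < k, ω i ∈ s i} = ∏ i ∈ Finset.range k, P (s i))
    (v : (Fin n → ℝ) → ℝ) (hvm : Measurable v)
    (hvb : ∃ M : ℝ, ∀ x ∈ Xhat, |v x| ≤ M)
    (h1 : ∀ x ∈ X \ T, lam * v x ≤ ∫ u, v (f x u) ∂P)
    (h2 : ∀ x ∈ Xhat \ X, v x ≤ 0) :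
    ∀ x0 ∈ X, 0 < v x0 →
      0 < Pinf {π : ℕ → (Fin m → ℝ) |
        ∃ k : ℕ, traj f x0 π k ∈ T ∧ ∀ l ≤ k, traj f x0 π l ∈ X} := by
  intro x0 hx0 hvx0
  obtain rfl := Measure.eq_infinitePi_of_cylinder hPinf
  obtain ⟨M, hM⟩ := hvb
  have hY : ∀ x ∈ X \ T, ∀ u ∈ U, f x u ∈ Xhat := fun x hx ↦ hXhat1 x hx.1
  by_contra hnull
  have hgrowth := pow_mul_le_integral_killedValue hf (hXo.measurableSet.diff hTo.measurableSet)
    hUc.isClosed.measurableSet hvm (zero_le_one.trans hlam.le) hPU hTX hY (hXhat2 hx0) hM h1 h2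
    (nonpos_iff_eq_zero.mp (not_lt.mp hnull))
  obtain ⟨k, hk⟩ := pow_unbounded_of_one_lt (M / v x0) hlam
  linarith [hgrowth k, integral_killedValue_le (Measure.infinitePi fun _ ↦ P) hY (hXhat2 hx0) hM k,
    (div_lt_iff₀ hvx0).mp hk]

/-- Proposition 2: the simplified expectation-based Lyapunov-like condition
yields a `0`-reach-avoid set. -/
theorem stmt_7 {n m : ℕ} (lam : ℝ) (hlam : 1 < lam)
    (f : (Fin n → ℝ) → (Fin m → ℝ) → (Fin n → ℝ))
    (hf : Measurable fun p : (Fin n → ℝ) × (Fin m → ℝ) => f p.1 p.2)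
    (U : Set (Fin m → ℝ)) (hUc : IsCompact U) (hUne : U.Nonempty)
    (X T Xhat : Set (Fin n → ℝ))
    (hXo : IsOpen X) (hXb : Bornology.IsBounded X)
    (hTo : IsOpen T) (hTb : Bornology.IsBounded T) (hTX : T ⊆ X)
    (hXhatm : MeasurableSet Xhat)
    (hXhat1 : ∀ x ∈ X, ∀ u ∈ U, f x u ∈ Xhat) (hXhat2 : X ⊆ Xhat)
    (P : Measure (Fin m → ℝ)) [IsProbabilityMeasure P] (hPU : P U = 1)
    -- `Pinf` is the i.i.d. product measure `P^∞` on the sequence space,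
    -- characterized on cylinder sets.
    (Pinf : Measure (ℕ → (Fin m → ℝ))) [IsProbabilityMeasure Pinf]
    (hPinf : ∀ (k : ℕ) (s : ℕ → Set (Fin m → ℝ)), (∀ i, MeasurableSet (s i)) →
      Pinf {ω | ∀ i < k, ω i ∈ s i} = ∏ i ∈ Finset.range k, P (s i))
    (v : (Fin n → ℝ) → ℝ) (hvm : Measurable v)
    (hvb : ∃ M : ℝ, ∀ x ∈ Xhat, |v x| ≤ M)
    (h1 : ∀ x ∈ X \ T, lam * v x ≤ ∫ u, v (f x u) ∂P)
    (h2 : ∀ x ∈ Xhat \ X, v x ≤ 0) :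
    ∀ x0 ∈ X, 0 < v x0 →
      0 < Pinf {π : ℕ → (Fin m → ℝ) |
        ∃ k : ℕ, traj f x0 π k ∈ T ∧ ∀ l ≤ k, traj f x0 π l ∈ X} :=
  stmt_7_general lam hlam f hf U hUc X T Xhat hXo hTo hTX hXhat1 hXhat2 P hPU Pinf hPinf v hvm hvb
    h1 h2
end
end

section
/- Let U = {u ∈ ℝᵐ : u̲ ≤ u ≤ ū} be a nondegenerate compact box, let ε ∈ [0,1], let δ ∈ (0, min_{1≤j≤m} (ū(j) − u̲(j))/2), and let λ > 1. Suppose f : ℝⁿ × ℝᵐ → ℝⁿ is continuous, v : ℝⁿ → ℝ is continuous and bounded on X̂, and ũ₀ : ℝⁿ → ℝᵐ satisfies u̲ + δ ≤ ũ₀(x) ≤ ū − δ componentwise for every x ∈ X\T. Set Z = (1−ε)(2δ)^m + ε ∏_{j=1}^m (ū(j) − u̲(j)). If for every x ∈ X\T it holds that (1−ε)/Z · ∫_{[ũ₀(x)−δ, ũ₀(x)+δ]} v(f(x,u)) du + ε/Z · ∫_{[u̲, ū]} v(f(x,u)) du ≥ λ·v(x) (Lebesgue integrals over the boxes), and v(x)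 ≤ 0 for every x ∈ X̂\X, then the set {x ∈ X : v(x) > 0} is a controlled reach-avoid set: for every x₀ ∈ X with v(x₀) > 0 there exist a control policy π and k ∈ ℕ with φ^π_{x₀}(k) ∈ T and φ^π_{x₀}(t) ∈ X for all 0 ≤ t ≤ k. -/
/-! The mixed sampling density `((1 - ε) 𝟙_{inner box} + ε 𝟙_U) / Z` has total mass one, so the
averaged condition gives, at every `x ∈ X \ T`, a control `u ∈ U` (a maximiser of `v (f x ·)`)
with `λ v x ≤ v (f x u)`. Following this greedy feedback from `x₀` with `v x₀ > 0`, the value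
grows like `λᵗ v x₀` while the state avoids `T`; positivity keeps the state in `X` because
`v ≤ 0` on `X̂ \ X`, and boundedness of `v` forces a visit to `T` in finite time. -/

open MeasureTheory Set

noncomputable section

theorem setIntegral_le_measureReal_mul {E : Type*} [MeasurableSpace E] {μ : Measure E}
    {s : Set E} {g : E → ℝ} {C : ℝ} (hs : MeasurableSet s) (hμs : μ s ≠ ⊤)
    (hg : IntegrableOn g s μ) (hC : ∀ x ∈ s, g x ≤ C) :
    ∫ x in s, g x ∂μ ≤ μ.real s * C :=
  (setIntegral_mono_on hg (integrableOn_const hμs) hs hC).trans_eq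
    (by rw [setIntegral_const, smul_eq_mul])

theorem IsCompact.exists_le_of_le_mixture_setIntegral {E : Type*} [TopologicalSpace E]
    [T2Space E] [MeasurableSpace E] [OpensMeasurableSpace E] {μ : Measure E}
    [IsFiniteMeasureOnCompacts μ] {s t : Set E} {g : E → ℝ} {p q c : ℝ}
    (ht : IsCompact t) (ht₀ : t.Nonempty) (hs : MeasurableSet s) (hst : s ⊆ t)
    (hg : ContinuousOn g t) (hp : 0 ≤ p) (hq : 0 ≤ q)
    (hpq : p * μ.real s + q * μ.real t = 1)
    (h : c ≤ p * ∫ x in s, g x ∂μ + q * ∫ x in t, g x ∂μ) :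
    ∃ x ∈ t, c ≤ g x := by
  obtain ⟨x, hx, hmax⟩ := ht.exists_isMaxOn ht₀ hg
  have hgt : IntegrableOn g t μ := hg.integrableOn_compact ht
  refine ⟨x, hx, ?_⟩
  calc c ≤ p * ∫ y in s, g y ∂μ + q * ∫ y in t, g y ∂μ := h
    _ ≤ p * (μ.real s * g x) + q * (μ.real t * g x) := by
      gcongr
      · exact setIntegral_le_measureReal_mul hs
          (ne_top_of_le_ne_top ht.measure_ne_top (measure_mono hst)) (hgt.mono_set hst)
          fun y hy => hmax (hst hy)
      · exact setIntegral_le_measureReal_mul ht.measurableSet ht.measure_ne_top hgt hmax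
    _ = g x := by linear_combination g x * hpq

theorem Real.volume_real_Icc_pi_sub_add {ι : Type*} [Fintype ι] (c : ι → ℝ) {δ : ℝ}
    (hδ : 0 ≤ δ) :
    volume.real (Icc (fun j => c j - δ) (fun j => c j + δ)) = (2 * δ) ^ Fintype.card ι := by
  rw [measureReal_def, Real.volume_Icc_pi_toReal fun j => by linarith]
  simp only [add_sub_sub_cancel, ← two_mul, Finset.prod_const, Finset.card_univ]

section ClosedLoop

variable {α : Type*} {F : α → α} {X T : Set α} {v : α → ℝ} {lam : ℝ} {x₀ : α}

theorem iterate_mem_and_pow_mul_le (hlam : 0 < lam)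
    (hgrow : ∀ x ∈ X \ T, lam * v x ≤ v (F x))
    (hexit : ∀ x ∈ X \ T, F x ∉ X → v (F x) ≤ 0) (hx₀ : x₀ ∈ X) (hv₀ : 0 < v x₀) (t : ℕ)
    (hT : ∀ s < t, F^[s] x₀ ∉ T) : F^[t] x₀ ∈ X ∧ lam ^ t * v x₀ ≤ v (F^[t] x₀) := by
  induction t with
  | zero => simpa using hx₀
  | succ t ih =>
    obtain ⟨hX, hv⟩ := ih fun s hs => hT s (hs.trans t.lt_succ_self)
    have hmem : F^[t] x₀ ∈ X \ T := ⟨hX, hT t t.lt_succ_self⟩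
    have hpos : 0 < v (F^[t] x₀) := (mul_pos (pow_pos hlam t) hv₀).trans_le hv
    rw [Function.iterate_succ_apply']
    refine ⟨?_, ?_⟩
    · by_contra hout
      exact (hexit _ hmem hout).not_gt ((mul_pos hlam hpos).trans_le (hgrow _ hmem))
    · calc lam ^ (t + 1) * v x₀ = lam * (lam ^ t * v x₀) := by ring
        _ ≤ lam * v (F^[t] x₀) := by gcongr
        _ ≤ v (F (F^[t] x₀)) := hgrow _ hmem

theorem exists_iterate_mem_of_lyapunov {M : ℝ} (hlam : 1 < lam)
    (hgrow : ∀ x ∈ X \ T, lam * v x ≤ v (F x))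
    (hexit : ∀ x ∈ X \ T, F x ∉ X → v (F x) ≤ 0) (hM : ∀ x ∈ X, v x ≤ M)
    (hx₀ : x₀ ∈ X) (hv₀ : 0 < v x₀) :
    ∃ k, F^[k] x₀ ∈ T ∧ ∀ t ≤ k, F^[t] x₀ ∈ X := by
  classical
  have key := iterate_mem_and_pow_mul_le (zero_lt_one.trans hlam) hgrow hexit hx₀ hv₀
  have hhit : ∃ k, F^[k] x₀ ∈ T := by
    by_contra! hT
    obtain ⟨N, hN⟩ := pow_unbounded_of_one_lt (M / v x₀) hlam
    obtain ⟨hX, hv⟩ := key N fun s _ => hT s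
    rw [div_lt_iff₀ hv₀] at hN
    linarith [hM _ hX]
  exact ⟨Nat.find hhit, Nat.find_spec hhit, fun t ht =>
    (key t fun s hs => Nat.find_min hhit (hs.trans_le ht)).1⟩

end ClosedLoop

theorem traj_feedback {n m : ℕ} (f : (Fin n → ℝ) → (Fin m → ℝ) → (Fin n → ℝ))
    (g : (Fin n → ℝ) → (Fin m → ℝ)) (x₀ : Fin n → ℝ) (t : ℕ) :
    traj f x₀ (fun s => g ((fun x => f x (g x))^[s] x₀)) t = (fun x => f x (g x))^[t] x₀ := by
  induction t with
  | zero => rfl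
  | succ t ih => simp only [traj, ih, Function.iterate_succ_apply']

theorem exists_policy_reach_avoid_of_forall_exists_le {n m : ℕ}
    {f : (Fin n → ℝ) → (Fin m → ℝ) → (Fin n → ℝ)} {U : Set (Fin m → ℝ)}
    {X T Xhat : Set (Fin n → ℝ)} {v : (Fin n → ℝ) → ℝ} {lam M : ℝ}
    (hU : U.Nonempty) (hlam : 1 < lam) (hfX : ∀ x ∈ X, ∀ u ∈ U, f x u ∈ Xhat)
    (hout : ∀ x ∈ Xhat \ X, v x ≤ 0) (hM : ∀ x ∈ X, v x ≤ M)
    (hstep : ∀ x ∈ X \ T, ∃ u ∈ U, lam * v x ≤ v (f x u))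
    {x₀ : Fin n → ℝ} (hx₀ : x₀ ∈ X) (hv₀ : 0 < v x₀) :
    ∃ π : ℕ → (Fin m → ℝ), (∀ t, π t ∈ U) ∧
      ∃ k : ℕ, traj f x₀ π k ∈ T ∧ ∀ t ≤ k, traj f x₀ π t ∈ X := by
  have hfeedback : ∀ x, ∃ u ∈ U, x ∈ X \ T → lam * v x ≤ v (f x u) := fun x => by
    by_cases hx : x ∈ X \ T
    · obtain ⟨u, hu, hle⟩ := hstep x hx
      exact ⟨u, hu, fun _ => hle⟩
    · exact ⟨hU.some, hU.some_mem, fun h => (hx h).elim⟩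
  choose g hgU hg using hfeedback
  obtain ⟨k, hkT, hkX⟩ := exists_iterate_mem_of_lyapunov (F := fun x => f x (g x)) hlam hg
    (fun x hx hFx => hout _ ⟨hfX x hx.1 _ (hgU x), hFx⟩) hM hx₀ hv₀
  refine ⟨fun t => g ((fun x => f x (g x))^[t] x₀), fun t => hgU _, k, ?_, fun t ht => ?_⟩
  · rwa [traj_feedback]
  · rw [traj_feedback]
    exact hkX t ht

theorem stmt_8_general {n m : ℕ} (lo hi : Fin m → ℝ) (hbox : ∀ j, lo j < hi j)
    (ε : ℝ) (hε0 : 0 ≤ ε) (hε1 : ε ≤ 1)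
    (δ : ℝ) (hδ0 : 0 < δ)
    (lam : ℝ) (hlam : 1 < lam)
    (f : (Fin n → ℝ) → (Fin m → ℝ) → (Fin n → ℝ))
    (hf : Continuous fun p : (Fin n → ℝ) × (Fin m → ℝ) => f p.1 p.2)
    (X T Xhat : Set (Fin n → ℝ))
    (hXhat1 : ∀ x ∈ X, ∀ u ∈ Set.Icc lo hi, f x u ∈ Xhat) (hXhat2 : X ⊆ Xhat)
    (v : (Fin n → ℝ) → ℝ) (hvc : Continuous v)
    (hvb : ∃ M : ℝ, ∀ x ∈ Xhat, |v x| ≤ M)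
    (tu0 : (Fin n → ℝ) → (Fin m → ℝ))
    (htu0 : ∀ x ∈ X \ T, ∀ j, lo j + δ ≤ tu0 x j ∧ tu0 x j ≤ hi j - δ)
    (Z : ℝ) (hZ : Z = (1 - ε) * (2 * δ) ^ m + ε * ∏ j, (hi j - lo j))
    (h1 : ∀ x ∈ X \ T,
      lam * v x ≤
        (1 - ε) / Z *
            (∫ u in Set.Icc (fun j => tu0 x j - δ) (fun j => tu0 x j + δ),
              v (f x u)) +
          ε / Z * ∫ u in Set.Icc lo hi, v (f x u))
    (h2 : ∀ x ∈ Xhat \ X, v x ≤ 0) :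
    ∀ x0 ∈ X, 0 < v x0 →
      ∃ π : ℕ → (Fin m → ℝ), (∀ t, π t ∈ Set.Icc lo hi) ∧
        ∃ k : ℕ, traj f x0 π k ∈ T ∧ ∀ t ≤ k, traj f x0 π t ∈ X := by
  intro x0 hx0 hv0
  obtain ⟨M, hM⟩ := hvb
  have hlohi : lo ≤ hi := fun j => (hbox j).le
  have hbox_vol : 0 < ∏ j, (hi j - lo j) := Finset.prod_pos fun j _ => sub_pos.2 (hbox j)
  have hZpos : 0 < Z := by
    rcases hε1.lt_or_eq with hε | rfl
    · rw [hZ]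
      nlinarith [mul_nonneg hε0 hbox_vol.le, pow_pos (mul_pos two_pos hδ0) m]
    · simpa [hZ] using hbox_vol
  refine exists_policy_reach_avoid_of_forall_exists_le (nonempty_Icc.2 hlohi) hlam hXhat1 h2
    (fun x hx => (le_abs_self _).trans (hM x (hXhat2 hx))) (fun x hx => ?_) hx0 hv0
  have hinner : Icc (fun j => tu0 x j - δ) (fun j => tu0 x j + δ) ⊆ Icc lo hi :=
    Icc_subset_Icc (fun j => by linarith [(htu0 x hx j).1])
      (fun j => by linarith [(htu0 x hx j).2])
  refine isCompact_Icc.exists_le_of_le_mixture_setIntegral (nonempty_Icc.2 hlohi)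
    measurableSet_Icc hinner (hvc.comp (hf.comp (.prodMk_right x))).continuousOn
    (div_nonneg (sub_nonneg.2 hε1) hZpos.le) (div_nonneg hε0 hZpos.le) ?_ (h1 x hx)
  rw [Real.volume_real_Icc_pi_sub_add _ hδ0.le, Fintype.card_fin, measureReal_def,
    Real.volume_Icc_pi_toReal hlohi]
  field_simp
  linarith

/-- Proposition 3 (ε-greedy condition): the mixed-distribution
Lyapunov-like condition yields a controlled reach-avoid set. -/
theorem stmt_8 {n m : ℕ} (lo hi : Fin m → ℝ) (hbox : ∀ j, lo j < hi j)
    (ε : ℝ) (hε0 : 0 ≤ ε) (hε1 : ε ≤ 1)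
    (δ : ℝ) (hδ0 : 0 < δ) (hδ : ∀ j, δ < (hi j - lo j) / 2)
    (lam : ℝ) (hlam : 1 < lam)
    (f : (Fin n → ℝ) → (Fin m → ℝ) → (Fin n → ℝ))
    (hf : Continuous fun p : (Fin n → ℝ) × (Fin m → ℝ) => f p.1 p.2)
    (X T Xhat : Set (Fin n → ℝ))
    (hXo : IsOpen X) (hXb : Bornology.IsBounded X)
    (hTo : IsOpen T) (hTb : Bornology.IsBounded T) (hTX : T ⊆ X)
    (hXhat1 : ∀ x ∈ X, ∀ u ∈ Set.Icc lo hi, f x u ∈ Xhat) (hXhat2 : X ⊆ Xhat)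
    (v : (Fin n → ℝ) → ℝ) (hvc : Continuous v)
    (hvb : ∃ M : ℝ, ∀ x ∈ Xhat, |v x| ≤ M)
    (tu0 : (Fin n → ℝ) → (Fin m → ℝ))
    (htu0 : ∀ x ∈ X \ T, ∀ j, lo j + δ ≤ tu0 x j ∧ tu0 x j ≤ hi j - δ)
    (Z : ℝ) (hZ : Z = (1 - ε) * (2 * δ) ^ m + ε * ∏ j, (hi j - lo j))
    (h1 : ∀ x ∈ X \ T,
      lam * v x ≤
        (1 - ε) / Z *
            (∫ u in Set.Icc (fun j => tu0 x j - δ) (fun j => tu0 x j + δ),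
              v (f x u)) +
          ε / Z * ∫ u in Set.Icc lo hi, v (f x u))
    (h2 : ∀ x ∈ Xhat \ X, v x ≤ 0) :
    ∀ x0 ∈ X, 0 < v x0 →
      ∃ π : ℕ → (Fin m → ℝ), (∀ t, π t ∈ Set.Icc lo hi) ∧
        ∃ k : ℕ, traj f x0 π k ∈ T ∧ ∀ t ≤ k, traj f x0 π t ∈ X :=
  stmt_8_general lo hi hbox ε hε0 hε1 δ hδ0 lam hlam f hf X T Xhat hXhat1 hXhat2 v hvc hvb tu0 htu0
    Z hZ h1 h2
end
end
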